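/- arXiv:2603.08876 — 2 statements merged into one kernel-verified Lean document; each statement's English description precedes it below -/
import Mathlib

section
/- For n ≥ 6 and 1 ≤ k ≤ ⌊n/2⌋ - 1: P^{n,k}(1) = 2k - n + 1 ≤ -1, and P^{n,k}(2) > 0. Consequently P^{n,k} has a root in (1,2). -/
open Finset

/-- P^{n,k}(r) = Σ_{j=0}^{k-1} r^{C(n-j,2)-(k-j)} - Σ_{i=0}^{m-3} r^{C(m,2)-m-i},
m = n - k + 1. -/
noncomputable def Pexp (n k : ℕ) (r : ℝ) : ℝ :=
  (∑ j ∈ Finset.range k, r ^ ((n - j) * (n - j - 1) / 2 - (k - j)))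
    - ∑ i ∈ Finset.range (n - k + 1 - 2),
        r ^ ((n - k + 1) * (n - k) / 2 - (n - k + 1) - i)

/- At r = 1 every monomial is 1, so P(1) counts k positive against m - 2 negative terms.
At r = 2 the negative exponents C(m,2) - m - i (i ≤ m - 3) are distinct, because
(m - 2)(m - 3) ≥ 0 keeps them nonnegative, and all lie below the positive exponent C(n,2) - k
of the term j = 0, because m ≤ n and k < m. A sum of distinct smaller powers of 2 loses to that
single term, and the root comes from the intermediate value theorem. -/

lemma Nat.sum_range_pow_sub_lt {a E L : ℕ} (ha : 2 ≤ a) (hL : L ≤ E + 1) :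
    ∑ i ∈ range L, a ^ (E - i) < a ^ (E + 1) := by
  rw [← sum_image (g := (E - ·)) fun i hi j hj hij => by
    simp only [coe_range, Set.mem_Iio] at hi hj hij; omega]
  exact Nat.geomSum_lt ha fun t ht => by simp only [mem_image] at ht; omega

lemma Nat.two_mul_sub_three_le_choose_two (m : ℕ) : 2 * m - 3 ≤ m.choose 2 := by
  rw [Nat.choose_two_right, Nat.le_div_iff_mul_le two_pos]
  rcases m with _ | _ | q
  · simp
  · simp
  · rw [show 2 * (q + 2) - 3 = 2 * q + 1 by omega, Nat.add_sub_cancel]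
    nlinarith [Nat.le_mul_self q]

lemma Pexp_eq_choose (n k : ℕ) (r : ℝ) :
    Pexp n k r = ∑ j ∈ range k, r ^ ((n - j).choose 2 - (k - j))
      - ∑ i ∈ range (n - k + 1 - 2), r ^ ((n - k + 1).choose 2 - (n - k + 1) - i) := by
  simp only [Pexp, Nat.choose_two_right, Nat.add_sub_cancel]

lemma Pexp_one {n k : ℕ} (h : k < n) : Pexp n k 1 = 2 * (k : ℝ) - n + 1 := by
  simp only [Pexp, one_pow, sum_const, card_range, nsmul_eq_mul, mul_one]
  rw [show n - k + 1 - 2 = n - (k + 1) by omega, Nat.cast_sub h]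
  push_cast
  ring

lemma Pexp_two_pos {n k : ℕ} (hk : 1 ≤ k) (hkn : 2 * k < n) : 0 < Pexp n k 2 := by
  set m := n - k + 1
  set E := m.choose 2 - m
  have hm : 2 * m - 3 ≤ m.choose 2 := Nat.two_mul_sub_three_le_choose_two m
  have hmn : m.choose 2 ≤ n.choose 2 := Nat.choose_le_choose 2 (by omega)
  have hneg : ∑ i ∈ range (m - 2), (2 : ℝ) ^ (E - i) < 2 ^ (E + 1) := by
    exact_mod_cast Nat.sum_range_pow_sub_lt le_rfl (by omega)
  have hgap : (2 : ℝ) ^ (E + 1) ≤ 2 ^ (n.choose 2 - k) :=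
    pow_le_pow_right₀ one_le_two (by omega)
  have hpos : (2 : ℝ) ^ (n.choose 2 - k)
      ≤ ∑ j ∈ range k, (2 : ℝ) ^ ((n - j).choose 2 - (k - j)) :=
    single_le_sum (f := fun j => (2 : ℝ) ^ ((n - j).choose 2 - (k - j)))
      (fun _ _ => by positivity) (mem_range.mpr hk)
  rw [Pexp_eq_choose]
  linarith

lemma continuous_Pexp (n k : ℕ) : Continuous (Pexp n k) := by
  unfold Pexp
  fun_prop

theorem stmt_14_general (n k : ℕ) (hk : 1 ≤ k) (hkn : k ≤ n / 2 - 1) :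
    Pexp n k 1 = 2 * (k : ℝ) - n + 1 ∧ 2 * (k : ℝ) - n + 1 ≤ -1 ∧
    0 < Pexp n k 2 ∧ ∃ r ∈ Set.Ioo (1 : ℝ) 2, Pexp n k r = 0 := by
  have h1 : Pexp n k 1 = 2 * (k : ℝ) - n + 1 := Pexp_one (by omega)
  have hle : 2 * (k : ℝ) - n + 1 ≤ -1 := by
    have : (2 * k + 2 : ℝ) ≤ n := by exact_mod_cast (by omega : 2 * k + 2 ≤ n)
    linarith
  have h2 : 0 < Pexp n k 2 := Pexp_two_pos hk (by omega)
  refine ⟨h1, hle, h2, ?_⟩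
  exact intermediate_value_Ioo one_le_two (continuous_Pexp n k).continuousOn
    ⟨by linarith, h2⟩

/-- For n ≥ 6 and 1 ≤ k ≤ ⌊n/2⌋ - 1: P^{n,k}(1) = 2k - n + 1 ≤ -1 and
P^{n,k}(2) > 0; consequently P^{n,k} has a root in (1,2). -/
theorem stmt_14 (n k : ℕ) (hn : 6 ≤ n) (hk : 1 ≤ k) (hkn : k ≤ n / 2 - 1) :
    Pexp n k 1 = 2 * (k : ℝ) - n + 1 ∧ 2 * (k : ℝ) - n + 1 ≤ -1 ∧
    0 < Pexp n k 2 ∧ ∃ r ∈ Set.Ioo (1 : ℝ) 2, Pexp n k r = 0 :=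
  stmt_14_general n k hk hkn
end

section
/- For n ≥ 6, 1 ≤ k ≤ ⌊n/2⌋ - 1, and r > 1, the inequality r·P^{n,k+1}(r) - P^{n,k}(r) > 0 holds. -/
open Finset

/-- Lexicographic index of edge (i,j), i<j, in K_n (1-based). -/
def idx (n i j : ℕ) : ℕ := (i - 1) * n - i * (i - 1) / 2 + (j - i)

/-- Geometric-weight cut value: sum over edges (i,j), 1 ≤ i < j ≤ n, crossing S,
of r^(N - idx(i,j)) where N = C(n,2). -/
noncomputable def cutW (n : ℕ) (S : Finset ℕ) (r : ℝ) : ℝ :=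
  ∑ i ∈ Finset.Icc 1 n, ∑ j ∈ Finset.Icc (i + 1) n,
    if (i ∈ S) ↔ (j ∈ S) then 0 else r ^ (n * (n - 1) / 2 - idx n i j)

/-- P^{n,k}(r) = W^n(C_k;r) - W^n(C_{k+1};r), where C_k = {1,...,k}. -/
noncomputable def P (n k : ℕ) (r : ℝ) : ℝ :=
  cutW n (Finset.Icc 1 k) r - cutW n (Finset.Icc 1 (k + 1)) r

lemma tri (m : ℕ) : 2 * ((m+1)*m/2) = (m+1)*m := by
  have h : Even ((m+1)*m) := by
    have := Nat.even_mul_succ_self m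
    rwa [mul_comm] at this
  exact Nat.two_mul_div_two_of_even h

lemma idx_succ (n i j : ℕ) (hij : i ≤ j) : idx n i (j+1) = idx n i j + 1 := by
  unfold idx; omega

lemma key_ineq (n i j : ℕ) (h1 : 1 ≤ i) (h2 : i < j) (h3 : j ≤ n) :
    2*((i-1)*n) + 2*(j-i) ≤ n*(n-1) + i*(i-1) := by
  zify [h1, show 1 ≤ n by omega, show i ≤ j by omega]
  have hin : (i:ℤ) + 1 ≤ n := by exact_mod_cast by omega
  nlinarith [mul_nonneg (show (0:ℤ) ≤ (n:ℤ) - i by linarith)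
    (show (0:ℤ) ≤ (n:ℤ) - i - 1 by linarith)]

lemma idx_le (n i j : ℕ) (h1 : 1 ≤ i) (h2 : i < j) (h3 : j ≤ n) :
    idx n i j ≤ n*(n-1)/2 := by
  unfold idx
  have ht := tri (i-1)
  have hs := tri (n-1)
  rw [show i - 1 + 1 = i by omega] at ht
  rw [show n - 1 + 1 = n by omega] at hs
  have key := key_ineq n i j h1 h2 h3
  have hle : i*(i-1) ≤ 2*((i-1)*n) := by
    calc i*(i-1) = (i-1)*i := by ring
    _ ≤ (i-1)*(2*n) := Nat.mul_le_mul_left _ (by omega)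
    _ = 2*((i-1)*n) := by ring
  omega

lemma idx_row (n k j : ℕ) (h1 : k + 2 ≤ j) (h2 : k + 2 ≤ n) :
    idx n (k+2) j = idx n (k+1) j + (n - (k+2)) := by
  unfold idx
  rw [show k+2-1 = k+1 from rfl, show k+1-1 = k from rfl]
  have t1 := tri k
  have t2 := tri (k+1)
  have h3 : (k+2)*(k+1) = (k+1)*k + 2*(k+1) := by ring
  have h4 : (k+1)*n = k*n + n := by ring
  have h5 : (k+1)*k ≤ 2*(k*n) := by
    calc (k+1)*k = k*(k+1) := by ring
    _ ≤ k*(2*n) := Nat.mul_le_mul_left _ (by omega)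
    _ = 2*(k*n) := by ring
  omega

lemma P_eq (n k : ℕ) (hk : 1 ≤ k) (hkn : k + 2 ≤ n) (r : ℝ) :
    P n k r = (∑ i ∈ Icc 1 k, r ^ (n*(n-1)/2 - idx n i (k+1)))
      - ∑ j ∈ Icc (k+2) n, r ^ (n*(n-1)/2 - idx n (k+1) j) := by
  have step1 : P n k r = ∑ i ∈ Icc 1 n,
      (if i ≤ k then r ^ (n*(n-1)/2 - idx n i (k+1))
       else if i = k+1 then -(∑ j ∈ Icc (k+2) n, r ^ (n*(n-1)/2 - idx n (k+1) j))
       else 0) := by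
    unfold P cutW
    rw [← Finset.sum_sub_distrib]
    refine Finset.sum_congr rfl fun i hi => ?_
    rw [← Finset.sum_sub_distrib]
    simp only [Finset.mem_Icc] at hi
    rcases le_or_gt i k with h | h
    · rw [if_pos h]
      have heach : ∀ j ∈ Icc (i+1) n,
          ((if ((i ∈ Icc 1 k) ↔ (j ∈ Icc 1 k)) then (0:ℝ) else r ^ (n*(n-1)/2 - idx n i j))
           - (if ((i ∈ Icc 1 (k+1)) ↔ (j ∈ Icc 1 (k+1))) then (0:ℝ) else r ^ (n*(n-1)/2 - idx n i j)))
          = if j = k+1 then r ^ (n*(n-1)/2 - idx n i j) else 0 := by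
        intro j hj
        simp only [Finset.mem_Icc] at hj ⊢
        split_ifs with a b c <;> first | ring1 | (exfalso; omega)
      rw [Finset.sum_congr rfl heach, Finset.sum_ite_eq' (Icc (i+1) n) (k+1)
        (fun j => r ^ (n*(n-1)/2 - idx n i j))]
      rw [if_pos (by simp only [Finset.mem_Icc]; omega)]
    · rw [if_neg (by omega)]
      by_cases h2 : i = k + 1
      · subst h2
        rw [if_pos rfl, ← Finset.sum_neg_distrib]
        refine Finset.sum_congr rfl fun j hj => ?_
        simp only [Finset.mem_Icc] at hj ⊢
        split_ifs with a b <;> first | ring1 | (exfalso; omega)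
      · rw [if_neg h2]
        refine Finset.sum_eq_zero fun j hj => ?_
        simp only [Finset.mem_Icc] at hj ⊢
        split_ifs with a b <;> first | ring1 | (exfalso; omega)
  have e1 : (∑ i ∈ Icc 1 k,
      (if i ≤ k then r ^ (n*(n-1)/2 - idx n i (k+1))
       else if i = k+1 then -(∑ j ∈ Icc (k+2) n, r ^ (n*(n-1)/2 - idx n (k+1) j))
       else 0))
      = ∑ i ∈ Icc 1 k, r ^ (n*(n-1)/2 - idx n i (k+1)) := by
    refine Finset.sum_congr rfl fun i hi => ?_
    simp only [Finset.mem_Icc] at hi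
    rw [if_pos hi.2]
  have e2 : (∑ i ∈ Icc (k+1) n,
      (if i ≤ k then r ^ (n*(n-1)/2 - idx n i (k+1))
       else if i = k+1 then -(∑ j ∈ Icc (k+2) n, r ^ (n*(n-1)/2 - idx n (k+1) j))
       else 0))
      = -(∑ j ∈ Icc (k+2) n, r ^ (n*(n-1)/2 - idx n (k+1) j)) := by
    have hins : Icc (k+1) n = insert (k+1) (Icc (k+2) n) := by
      ext x; simp only [Finset.mem_insert, Finset.mem_Icc]; omega
    rw [hins, Finset.sum_insert (by simp only [Finset.mem_Icc]; omega)]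
    rw [if_neg (by omega), if_pos rfl]
    have e3 : (∑ i ∈ Icc (k+2) n,
        (if i ≤ k then r ^ (n*(n-1)/2 - idx n i (k+1))
         else if i = k+1 then -(∑ j ∈ Icc (k+2) n, r ^ (n*(n-1)/2 - idx n (k+1) j))
         else 0)) = 0 := by
      refine Finset.sum_eq_zero fun i hi => ?_
      simp only [Finset.mem_Icc] at hi
      rw [if_neg (by omega), if_neg (by omega)]
    rw [e3]; ring
  have hsplit : Icc 1 n = Icc 1 k ∪ Icc (k+1) n := by
    ext x; simp only [Finset.mem_union, Finset.mem_Icc]; omega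
  have hdisj : Disjoint (Icc 1 k) (Icc (k+1) n) := by
    rw [Finset.disjoint_left]; intro a ha hb
    simp only [Finset.mem_Icc] at ha hb; omega
  rw [step1, hsplit, Finset.sum_union hdisj, e1, e2]
  ring

/-- For n ≥ 6, 1 ≤ k ≤ ⌊n/2⌋ - 1, and r > 1: r·P^{n,k+1}(r) - P^{n,k}(r) > 0. -/
theorem stmt_17 (n k : ℕ) (hn : 6 ≤ n) (hk : 1 ≤ k) (hkn : k ≤ n / 2 - 1)
    (r : ℝ) (hr : 1 < r) :
    0 < r * P n (k + 1) r - P n k r := by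
  have hr0 : (0:ℝ) < r := lt_trans zero_lt_one hr
  have hkn4 : k + 4 ≤ n := by omega
  rw [P_eq n k hk (by omega) r, P_eq n (k+1) (by omega) (by omega) r]
  set N := n*(n-1)/2 with hN
  set A := ∑ i ∈ Icc 1 k, r ^ (N - idx n i (k+1)) with hA
  set B := ∑ j ∈ Icc (k+2) n, r ^ (N - idx n (k+1) j) with hB
  set C := ∑ j ∈ Icc (k+3) n, r ^ (N - idx n (k+1) j) with hC
  set B' := ∑ j ∈ Icc ((k+1)+2) n, r ^ (N - idx n ((k+1)+1) j) with hB'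
  set e := N - idx n (k+1) (k+2) with he
  have hA' : r * (∑ i ∈ Icc 1 (k+1), r ^ (N - idx n i ((k+1)+1))) = A + r ^ (e+1) := by
    rw [Finset.sum_Icc_succ_top (by omega : 1 ≤ k+1)]
    rw [mul_add, Finset.mul_sum]
    congr 1
    · rw [hA]
      refine Finset.sum_congr rfl fun i hi => ?_
      simp only [Finset.mem_Icc] at hi
      have h1 : idx n i (k+2) = idx n i (k+1) + 1 := idx_succ n i (k+1) (by omega)
      have h2 : idx n i (k+2) ≤ N := idx_le n i (k+2) hi.1 (by omega) (by omega)
      have h3 : N - idx n i (k+1) = (N - idx n i (k+2)) + 1 := by omega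
      rw [show ((k+1)+1) = k+2 from rfl, h3, pow_succ]
      ring
    · have h2 : idx n (k+1) (k+2) ≤ N := idx_le n (k+1) (k+2) (by omega) (by omega) (by omega)
      rw [he, show ((k+1)+1) = k+2 from rfl, pow_succ]
      ring
  have hBC : B = r ^ e + C := by
    rw [hB, hC, show Icc (k+2) n = insert (k+2) (Icc (k+3) n) by
      ext x; simp only [Finset.mem_insert, Finset.mem_Icc]; omega,
      Finset.sum_insert (by simp only [Finset.mem_Icc]; omega)]
  have hB'C : r * B' ≤ C := by
    rw [hB', hC, Finset.mul_sum]
    refine Finset.sum_le_sum fun j hj => ?_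
    simp only [Finset.mem_Icc] at hj
    have ha : idx n (k+2) j = idx n (k+1) j + (n - (k+2)) :=
      idx_row n k j (by omega) (by omega)
    have hb : idx n (k+2) j ≤ N := idx_le n (k+2) j (by omega) (by omega) (by omega)
    have hexp : (N - idx n (k+2) j) + 1 ≤ N - idx n (k+1) j := by omega
    calc r * r ^ (N - idx n ((k+1)+1) j)
        = r ^ ((N - idx n (k+2) j) + 1) := by rw [pow_succ]; ring
      _ ≤ r ^ (N - idx n (k+1) j) := pow_le_pow_right₀ hr.le hexp
  have hp1 : (0:ℝ) < r ^ (e+1) := pow_pos hr0 _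
  have hp2 : (0:ℝ) < r ^ e := pow_pos hr0 _
  rw [mul_sub]
  linarith [hA', hBC, hB'C]
end
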